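/- For every sequence of workers σ with all bids b_{ij} ∈ [1, R] and R ≤ εB, the number of tasks assigned by the Online Heterogeneous Algorithm OHA satisfies OPT(σ) ≤ (R·e)^ε · (ln(R) + 3) · ALG_OHA(σ), where OPT(σ) is the maximum size of a budget-feasible assignment for σ. -/

import Mathlib

/-- `P` is a valid assignment of workers (indexed by `Fin n`) to tasks
(indexed by `Fin m`): every assigned task is feasible for its worker, and
each worker and each task appears at most once. -/
def IsAssignment {n m : ℕ} (J : Fin n → Finset (Fin m)) (P : Finset (Fin n × Fin m)) : Prop :=
  (∀ p ∈ P, p.2 ∈ J p.1) ∧ ∀ p ∈ P, ∀ q ∈ P, p ≠ q → p.1 ≠ q.1 ∧ p.2 ≠ q.2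

open scoped Classical in
/-- `OPTval J b B`: the maximum size of a budget-feasible assignment. -/
noncomputable def OPTval {n m : ℕ} (J : Fin n → Finset (Fin m)) (b : Fin n → Fin m → ℝ)
    (B : ℝ) : ℕ :=
  ((Finset.univ : Finset (Finset (Fin n × Fin m))).filter
    fun P => IsAssignment J P ∧ ∑ p ∈ P, b p.1 p.2 ≤ B).sup Finset.card

open scoped Classical in
/-- The Online Heterogeneous Algorithm `OHA`, run on the list of workers `L`, set of
still-unassigned tasks `T` and remaining budget `f` (the total budget being `B`).
The fraction of budget spent so far is `x = (B - f)/B` and the potential function is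
`φ(x) = min ((R e)^(1-x)) R`.  On each worker `i` it computes the set `C_i` of
still-unassigned feasible tasks `j` with `b i j ≤ min f (φ x)`; if `C_i` is nonempty
it assigns the task `choice C_i` to worker `i` and pays her bid.  It returns the
number of assigned tasks. -/
noncomputable def ohaRun {n m : ℕ} (J : Fin n → Finset (Fin m)) (b : Fin n → Fin m → ℝ)
    (choice : Finset (Fin m) → Fin m) (R B : ℝ) :
    List (Fin n) → Finset (Fin m) → ℝ → ℕ
  | [], _, _ => 0
  | i :: rest, T, f =>
    let φ := min ((R * Real.exp 1) ^ (1 - (B - f) / B)) R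
    let C := T.filter fun j => j ∈ J i ∧ b i j ≤ min f φ
    if C.Nonempty then
      ohaRun J b choice R B rest (T.erase (choice C)) (f - b i (choice C)) + 1
    else
      ohaRun J b choice R B rest T f

/-!
Fix an optimal assignment `P` and run OHA to the end, leaving assigned workers `W`, free tasks
`T`, remaining budget `f` and spent fraction `x = (B - f) / B`. A pair of `P` has its worker in
`W` or its task outside `T` (at most `ALG` pairs each), or else it was rejected: its bid exceeds
the final threshold `min f (φ x)`.

With `L = ln R + 1` we have `φ x = min (e^{(1-x)L}) (e^{L-1})`. Let `Ψ` be the primitive of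
`max (e^{1-L}) (e^{(x-1)L})` vanishing at `0`. An assignment spending `δB ≤ φ x` raises `B Ψ`
by at most `e^{δL} ≤ 1 + ((Re)^ε - 1) δ / ε` (convexity of `exp`, as `δ ≤ R / B ≤ ε`); summing,
and using `x ≤ R ALG / B ≤ ε ALG`, gives `B Ψ x ≤ (Re)^ε ALG`. If `φ` is what rejects (then
`x ≥ 1 / L`), each rejected bid takes at least `φ x = 1 / (L Ψ x)` out of `B`; if the budget is
what rejects, the spent budget `B - f ≤ R ALG` is close to `B`. Either way at most
`((Re)^ε L + 2 (Re)^ε - 2) ALG` pairs are rejected, and `L + 2 = ln R + 3`.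
-/

open Real

namespace Real

theorem exp_sub_exp_le_mul_exp (s t : ℝ) : exp t - exp s ≤ (t - s) * exp t := by
  have h : exp t * exp (-(t - s)) = exp s := by rw [← exp_add]; ring_nf
  nlinarith [one_sub_le_exp_neg (t - s), exp_pos t]

theorem exp_mul_le_one_add_mul {t : ℝ} (s : ℝ) (ht0 : 0 ≤ t) (ht1 : t ≤ 1) :
    exp (t * s) ≤ 1 + t * (exp s - 1) := by
  have h := convexOn_exp.2 (Set.mem_univ s) (Set.mem_univ 0) ht0 (sub_nonneg.2 ht1) (by ring)
  simp only [smul_eq_mul, mul_zero, add_zero, exp_zero, mul_one] at h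
  linarith

theorem exp_mul_le_one_add_sq {y : ℝ} (hy : 0 ≤ y) :
    exp y * (1 - 4 * y ^ 2 - y ^ 3) ≤ (1 + y) ^ 2 := by
  rcases le_or_gt (1 - 4 * y ^ 2 - y ^ 3) 0 with hneg | hpos
  · nlinarith [exp_pos y]
  have hy1 : y < 1 := by nlinarith
  have hexp : exp y * (1 - y) ≤ 1 := by
    have := exp_bound_div_one_sub_of_interval hy hy1
    rwa [le_div_iff₀ (by linarith)] at this
  calc exp y * (1 - 4 * y ^ 2 - y ^ 3) ≤ exp y * ((1 - y) * (1 + y) ^ 2) :=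
        mul_le_mul_of_nonneg_left (by nlinarith) (exp_nonneg y)
    _ = exp y * (1 - y) * (1 + y) ^ 2 := by ring
    _ ≤ (1 + y) ^ 2 := by nlinarith [sq_nonneg (1 + y)]

end Real

/-- The potential `Ψ` of the analysis: the primitive of `max (e^{1-L}) (e^{(x-1)L})` vanishing
at `0`. -/
noncomputable def ohaPotential (L x : ℝ) : ℝ :=
  if x ≤ 1 / L then x * exp (1 - L) else exp ((x - 1) * L) / L

section Potential

variable {L : ℝ}

theorem ohaPotential_zero (hL : 0 < L) : ohaPotential L 0 = 0 := by
  simp [ohaPotential, hL.le]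

theorem ohaPotential_of_inv_le (hL : 0 < L) {x : ℝ} (hx : 1 / L ≤ x) :
    ohaPotential L x = exp ((x - 1) * L) / L := by
  rw [ohaPotential]
  split_ifs with h
  · obtain rfl := le_antisymm h hx
    rw [show (1 / L - 1) * L = 1 - L by field_simp]
    field_simp
  · rfl

theorem ohaPotential_sub_le (hL : 0 < L) {x y : ℝ} (hxy : x ≤ y) :
    ohaPotential L y - ohaPotential L x ≤ (y - x) * max (exp (1 - L)) (exp ((y - 1) * L)) := by
  have linear {x y : ℝ} (hxy : x ≤ y) (hy : y ≤ 1 / L) :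
      ohaPotential L y - ohaPotential L x = (y - x) * exp (1 - L) := by
    simp only [ohaPotential, if_pos hy, if_pos (hxy.trans hy)]; ring
  have convex {x y : ℝ} (hxy : x ≤ y) (hx : 1 / L ≤ x) :
      ohaPotential L y - ohaPotential L x ≤ (y - x) * exp ((y - 1) * L) := by
    rw [ohaPotential_of_inv_le hL hx, ohaPotential_of_inv_le hL (hx.trans hxy), ← sub_div,
      div_le_iff₀ hL]
    have := exp_sub_exp_le_mul_exp ((x - 1) * L) ((y - 1) * L)
    linarith
  have hmax := le_max_left (exp (1 - L)) (exp ((y - 1) * L))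
  have hmax' := le_max_right (exp (1 - L)) (exp ((y - 1) * L))
  rcases le_total y (1 / L) with hy | hy
  · rw [linear hxy hy]; exact mul_le_mul_of_nonneg_left hmax (by linarith)
  rcases le_total (1 / L) x with hx | hx
  · exact (convex hxy hx).trans (mul_le_mul_of_nonneg_left hmax' (by linarith))
  · have h1 := linear hx le_rfl
    have h2 := convex hy le_rfl
    nlinarith [mul_le_mul_of_nonneg_left hmax (show 0 ≤ 1 / L - x by linarith)]

theorem mul_ohaPotential_add_le (hL : 0 < L) {B ε x δ : ℝ} (hB : 0 ≤ B) (hε : 0 < ε)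
    (hδ : 0 ≤ δ) (hδε : δ ≤ ε) (hδR : B * δ ≤ exp (L - 1)) (hδφ : B * δ ≤ exp ((1 - x) * L)) :
    B * ohaPotential L (x + δ) ≤ B * ohaPotential L x + 1 + (exp (ε * L) - 1) * (δ / ε) := by
  have hgrowth : B * δ * max (exp (1 - L)) (exp ((x + δ - 1) * L)) ≤ exp (δ * L) := by
    rw [mul_max_of_nonneg _ _ (mul_nonneg hB hδ), max_le_iff]
    constructor
    · calc B * δ * exp (1 - L) ≤ exp (L - 1) * exp (1 - L) :=
            mul_le_mul_of_nonneg_right hδR (exp_nonneg _)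
        _ = 1 := by rw [← exp_add]; simp
        _ ≤ exp (δ * L) := one_le_exp (by positivity)
    · calc B * δ * exp ((x + δ - 1) * L) ≤ exp ((1 - x) * L) * exp ((x + δ - 1) * L) :=
            mul_le_mul_of_nonneg_right hδφ (exp_nonneg _)
        _ = exp (δ * L) := by rw [← exp_add]; ring_nf
  have hsecant : exp (δ * L) ≤ 1 + (exp (ε * L) - 1) * (δ / ε) := by
    have := exp_mul_le_one_add_mul (ε * L) (div_nonneg hδ hε.le) ((div_le_one hε).2 hδε)
    rwa [show δ / ε * (ε * L) = δ * L by field_simp, mul_comm (δ / ε)] at this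
  have hsub := ohaPotential_sub_le hL (le_add_of_nonneg_right hδ) (x := x)
  rw [add_sub_cancel_left] at hsub
  nlinarith [mul_le_mul_of_nonneg_left hsub hB]

end Potential

section Counting

variable {L B ε f N M : ℝ} {k : ℕ}

theorem exp_sub_one_mul_le (hL : 0 ≤ L) (hB : 0 ≤ B) (hRB : exp (L - 1) ≤ ε * B) :
    exp (L - 1) * L ≤ (exp (ε * L) - 1) * B := by
  nlinarith [mul_le_mul_of_nonneg_right (add_one_le_exp (ε * L)) hB,
    mul_le_mul_of_nonneg_right hRB hL]

theorem inv_le_sub_div_iff (hL : 0 < L) (hB : 0 < B) :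
    1 / L ≤ (B - f) / B ↔ f / B * L ≤ L - 1 := by
  rw [div_le_div_iff₀ hL hB, div_mul_eq_mul_div, div_le_iff₀ hB]
  constructor <;> intro h <;> linarith

theorem mul_ohaPotential_eq (hL : 0 < L) (hB : 0 < B) (hx : 1 / L ≤ (B - f) / B) :
    L * (B * ohaPotential L ((B - f) / B)) = B / exp (f / B * L) := by
  rw [ohaPotential_of_inv_le hL hx,
    show ((B - f) / B - 1) * L = -(f / B * L) by field_simp; ring, exp_neg]
  field_simp

theorem le_of_mul_exp_le (hL : 0 < L) (hB : 0 < B) (hx : 1 / L ≤ (B - f) / B)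
    (hpot : B * ohaPotential L ((B - f) / B) ≤ exp (ε * L) * k)
    (hN : N * exp (f / B * L) ≤ B) :
    N ≤ exp (ε * L) * L * k := by
  calc N ≤ B / exp (f / B * L) := (le_div_iff₀ (exp_pos _)).2 hN
    _ = L * (B * ohaPotential L ((B - f) / B)) := (mul_ohaPotential_eq hL hB hx).symm
    _ ≤ L * (exp (ε * L) * k) := mul_le_mul_of_nonneg_left hpot hL.le
    _ = exp (ε * L) * L * k := by ring

/- In the next two lemmas `N` bids, each at least `M ≥ max f 1`, fit into the budget `B`: they
are the optimal pairs rejected because the final budget `f` was too small. -/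

theorem le_of_mul_le_of_inv_le (hL : 0 < L) (hB : 0 < B) (hx : 1 / L ≤ (B - f) / B)
    (hRB : exp (L - 1) ≤ ε * B) (hf : f ≤ B / 2) (hspent : B - f ≤ k * exp (L - 1))
    (hpot : B * ohaPotential L ((B - f) / B) ≤ exp (ε * L) * k)
    (hM1 : 1 ≤ M) (hfM : f ≤ M) (hN : N * M ≤ B) :
    N ≤ (exp (ε * L) * L + 2 * exp (ε * L) - 2) * k := by
  have hlinear : B ≤ B / exp (f / B * L) + f * L := by
    have := mul_le_mul_of_nonneg_left (one_sub_le_exp_neg (f / B * L)) hB.le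
    rw [exp_neg, ← div_eq_mul_inv, mul_sub, mul_one, ← mul_assoc, mul_div_cancel₀ _ hB.ne']
      at this
    linarith
  have hN' : N ≤ B / exp (f / B * L) + L := by
    refine le_of_mul_le_mul_right ?_ (by linarith : 0 < M)
    have : 0 ≤ B / exp (f / B * L) := by positivity
    nlinarith
  have hL_le : L ≤ 2 * (exp (ε * L) - 1) * k := by
    refine le_of_mul_le_mul_left ?_ hB
    nlinarith [exp_sub_one_mul_le hL.le hB.le hRB, mul_le_mul_of_nonneg_right hspent hL.le]
  rw [← mul_ohaPotential_eq hL hB hx] at hN'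
  nlinarith

theorem le_of_mul_le_of_lt_inv (hL : 1 ≤ L) (hB : 0 < B) (hx : (B - f) / B < 1 / L)
    (hRB : exp (L - 1) ≤ ε * B) (hf0 : 0 ≤ f) (hf : f ≤ B / 2)
    (hspent : B - f ≤ k * exp (L - 1)) (hM1 : 1 ≤ M) (hfM : f ≤ M) (hN : N * M ≤ B) :
    N ≤ (exp (ε * L) * L + 2 * exp (ε * L) - 2) * k := by
  set R := exp (L - 1)
  -- with `y = L - 1`, the difference of the two sides is `L ^ 2 - R * (1 - 4 y ^ 2 - y ^ 3)`
  have hkey : R * L ≤ L ^ 2 + R * (L ^ 2 + 2 * L - 2) * (L - 1) := by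
    have := exp_mul_le_one_add_sq (show 0 ≤ L - 1 by linarith)
    nlinarith
  have hfL : B * (L - 1) < M * L := by
    rw [div_lt_div_iff₀ hB (by linarith)] at hx
    nlinarith
  have hR0 : 0 < R := exp_pos _
  have hk : (0 : ℝ) ≤ k := k.cast_nonneg
  have hBR : R * B ≤ L * M * B + R * (L ^ 2 + 2 * L - 2) * M := by
    refine le_of_mul_le_mul_left ?_ (by linarith : 0 < L)
    have hcoef : 0 ≤ R * (L ^ 2 + 2 * L - 2) := by nlinarith
    nlinarith [mul_le_mul_of_nonneg_right hkey hB.le, mul_le_mul_of_nonneg_left hfL.le hcoef,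
      mul_le_mul_of_nonneg_left hM1 (by positivity : 0 ≤ L ^ 2 * B)]
  have hsub := exp_sub_one_mul_le (by linarith) hB.le hRB
  refine le_of_mul_le_mul_right ?_ (by nlinarith : 0 < M * B)
  calc N * (M * B) ≤ (k * R + f) * B := by nlinarith
    _ ≤ k * (R * B + 2 * R * M) := by
        nlinarith [mul_le_mul_of_nonneg_left hfM (by positivity : 0 ≤ k * R)]
    _ ≤ k * (M * (L * B + R * L * (L + 2))) := by nlinarith
    _ ≤ k * (M * (L * B + (exp (ε * L) - 1) * B * (L + 2))) := by gcongr
    _ = (exp (ε * L) * L + 2 * exp (ε * L) - 2) * k * (M * B) := by ring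

theorem card_mul_le_of_forall_le {ι : Type*} {Q : Finset ι} {w : ι → ℝ} {t : ℝ}
    (ht : ∀ q ∈ Q, t ≤ w q) (hsum : ∑ q ∈ Q, w q ≤ B) : (Q.card : ℝ) * t ≤ B := by
  have := Finset.card_nsmul_le_sum Q w t ht
  rw [nsmul_eq_mul] at this
  linarith

variable {ι : Type*} (Q : Finset ι) (w : ι → ℝ)

theorem card_le_of_budget_lt (hL : 1 ≤ L) (hB : 0 < B) (hRB : exp (L - 1) ≤ ε * B)
    (hf0 : 0 ≤ f) (hspent : B - f ≤ k * exp (L - 1))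
    (hpot : B * ohaPotential L ((B - f) / B) ≤ exp (ε * L) * k)
    (hw1 : ∀ q ∈ Q, 1 ≤ w q) (hrej : ∀ q ∈ Q, f < w q) (hsum : ∑ q ∈ Q, w q ≤ B) :
    (Q.card : ℝ) ≤ (exp (ε * L) * L + 2 * exp (ε * L) - 2) * k := by
  have hN := card_mul_le_of_forall_le (fun q hq => max_le (hrej q hq).le (hw1 q hq)) hsum
  rcases le_or_gt f (B / 2) with hf | hf
  · rcases le_or_gt (1 / L) ((B - f) / B) with hx | hx
    · exact le_of_mul_le_of_inv_le (by linarith) hB hx hRB hf hspent hpot (le_max_right _ _)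
        (le_max_left _ _) hN
    · exact le_of_mul_le_of_lt_inv hL hB hx hRB hf0 hf hspent (le_max_right _ _)
        (le_max_left _ _) hN
  have hε : 0 < ε := pos_of_mul_pos_left ((exp_pos _).trans_le hRB) hB.le
  have hC : 1 ≤ exp (ε * L) * L + 2 * exp (ε * L) - 2 := by
    nlinarith [one_le_exp (by positivity : 0 ≤ ε * L)]
  obtain rfl | ⟨q, hq⟩ := Q.eq_empty_or_nonempty
  · simp only [Finset.card_empty, Nat.cast_zero]
    positivity
  have hN1 : (Q.card : ℝ) ≤ 1 := by
    have : (Q.card : ℝ) < 2 := by nlinarith [le_max_left f 1]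
    exact_mod_cast Nat.lt_succ_iff.1 (by exact_mod_cast this)
  have hk1 : (1 : ℝ) ≤ k := by
    have hwB : w q ≤ B :=
      (Finset.single_le_sum (fun q hq => by linarith [hw1 q hq]) hq).trans hsum
    have : (0 : ℝ) < k := pos_of_mul_pos_left (by linarith [hrej q hq]) (exp_pos (L - 1)).le
    exact_mod_cast Nat.one_le_iff_ne_zero.2 (by exact_mod_cast this.ne')
  nlinarith

theorem card_le_of_threshold_lt (hL : 1 ≤ L) (hB : 0 < B) (hRB : exp (L - 1) ≤ ε * B)
    (hf0 : 0 ≤ f) (hspent : B - f ≤ k * exp (L - 1))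
    (hpot : B * ohaPotential L ((B - f) / B) ≤ exp (ε * L) * k)
    (hw1 : ∀ q ∈ Q, 1 ≤ w q) (hwR : ∀ q ∈ Q, w q ≤ exp (L - 1))
    (hrej : ∀ q ∈ Q, min f (min (exp (f / B * L)) (exp (L - 1))) < w q)
    (hsum : ∑ q ∈ Q, w q ≤ B) :
    (Q.card : ℝ) ≤ (exp (ε * L) * L + 2 * exp (ε * L) - 2) * k := by
  rcases le_or_gt f (min (exp (f / B * L)) (exp (L - 1))) with hfφ | hφf
  · refine card_le_of_budget_lt Q w hL hB hRB hf0 hspent hpot hw1 (fun q hq => ?_) hsum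
    simpa only [min_eq_left hfφ] using hrej q hq
  simp only [min_eq_right hφf.le] at hrej
  have hε : 0 < ε := pos_of_mul_pos_left ((exp_pos _).trans_le hRB) hB.le
  have ha : 1 ≤ exp (ε * L) := one_le_exp (by positivity)
  rcases le_or_gt (1 / L) ((B - f) / B) with hx | hx
  · have hφ : exp (f / B * L) ≤ exp (L - 1) :=
      exp_le_exp.2 ((inv_le_sub_div_iff (by linarith) hB).1 hx)
    simp only [min_eq_left hφ] at hrej
    have hN := le_of_mul_exp_le (by linarith) hB hx hpot
      (card_mul_le_of_forall_le (fun q hq => (hrej q hq).le) hsum)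
    nlinarith [(k.cast_nonneg : (0 : ℝ) ≤ k)]
  · have hφ : exp (L - 1) ≤ exp (f / B * L) :=
      exp_le_exp.2 (not_le.1 (mt (inv_le_sub_div_iff (by linarith) hB).2 (not_le.2 hx))).le
    simp only [min_eq_right hφ] at hrej
    have hQ : Q = ∅ :=
      Finset.eq_empty_of_forall_notMem fun q hq => (hwR q hq).not_gt (hrej q hq)
    simp only [hQ, Finset.card_empty, Nat.cast_zero]
    exact mul_nonneg (by nlinarith) k.cast_nonneg

end Counting

/-- `ohaRun` only returns the number of assignments; folding `ohaStep` over the workers replays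
it while keeping track of the assigned workers, the free tasks and the remaining budget. -/
structure OhaState (n m : ℕ) where
  workers : Finset (Fin n)
  tasks : Finset (Fin m)
  budget : ℝ

section Algorithm

variable {n m : ℕ} (J : Fin n → Finset (Fin m)) (b : Fin n → Fin m → ℝ)
  (choice : Finset (Fin m) → Fin m) (R B : ℝ)

noncomputable def ohaThreshold (f : ℝ) : ℝ :=
  min f (min ((R * exp 1) ^ (1 - (B - f) / B)) R)

open scoped Classical in
noncomputable def ohaCandidates (i : Fin n) (T : Finset (Fin m)) (f : ℝ) : Finset (Fin m) :=
  T.filter fun j => j ∈ J i ∧ b i j ≤ ohaThreshold R B f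

open scoped Classical in
noncomputable def ohaStep (s : OhaState n m) (i : Fin n) : OhaState n m :=
  if (ohaCandidates J b R B i s.tasks s.budget).Nonempty then
    let j := choice (ohaCandidates J b R B i s.tasks s.budget)
    ⟨insert i s.workers, s.tasks.erase j, s.budget - b i j⟩
  else s

noncomputable def ohaFinal : List (Fin n) → OhaState n m → OhaState n m
  | [], s => s
  | i :: ws, s => ohaFinal ws (ohaStep J b choice R B s i)

variable {J b choice R B}

theorem ohaRun_cons_of_nonempty {i : Fin n} {s : OhaState n m} (ws : List (Fin n))
    (h : (ohaCandidates J b R B i s.tasks s.budget).Nonempty) :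
    ohaRun J b choice R B (i :: ws) s.tasks s.budget =
      ohaRun J b choice R B ws (ohaStep J b choice R B s i).tasks
        (ohaStep J b choice R B s i).budget + 1 := by
  rw [ohaStep, if_pos h]
  exact if_pos h

theorem ohaRun_cons_of_not_nonempty {i : Fin n} {s : OhaState n m} (ws : List (Fin n))
    (h : ¬(ohaCandidates J b R B i s.tasks s.budget).Nonempty) :
    ohaRun J b choice R B (i :: ws) s.tasks s.budget = ohaRun J b choice R B ws s.tasks s.budget :=
  if_neg h

theorem ohaStep_of_not_nonempty {i : Fin n} {s : OhaState n m}
    (h : ¬(ohaCandidates J b R B i s.tasks s.budget).Nonempty) :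
    ohaStep J b choice R B s i = s :=
  if_neg h

theorem ohaFinal_induction (p : OhaState n m → Prop)
    (hp : ∀ s i, p s → p (ohaStep J b choice R B s i)) :
    ∀ (ws : List (Fin n)) (s : OhaState n m), p s → p (ohaFinal J b choice R B ws s)
  | [], _, hs => hs
  | i :: ws, s, hs => ohaFinal_induction p hp ws _ (hp s i hs)

theorem apply_ohaFinal_le (g : OhaState n m → ℝ) (c : ℝ)
    (hg : ∀ s i, (ohaCandidates J b R B i s.tasks s.budget).Nonempty →
      g (ohaStep J b choice R B s i) ≤ g s + c) :
    ∀ (ws : List (Fin n)) (s : OhaState n m),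
      g (ohaFinal J b choice R B ws s) ≤ g s + c * ohaRun J b choice R B ws s.tasks s.budget
  | [], s => by simp [ohaFinal, ohaRun]
  | i :: ws, s => by
    have ih := apply_ohaFinal_le g c hg ws (ohaStep J b choice R B s i)
    rw [ohaFinal]
    by_cases h : (ohaCandidates J b R B i s.tasks s.budget).Nonempty
    · rw [ohaRun_cons_of_nonempty ws h]
      push_cast
      linarith [hg s i h]
    · simpa only [ohaRun_cons_of_not_nonempty ws h, ohaStep_of_not_nonempty h] using ih

theorem ohaThreshold_mono (hB : 0 < B) (hR : 1 ≤ R) : Monotone (ohaThreshold R B) := by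
  intro f f' hff'
  refine min_le_min hff' (min_le_min (rpow_le_rpow_of_exponent_le ?_ ?_) le_rfl)
  · nlinarith [add_one_le_exp 1]
  · have : (B - f') / B ≤ (B - f) / B := by gcongr
    linarith

theorem ohaThreshold_exp_eq {L : ℝ} (hB : B ≠ 0) (f : ℝ) :
    ohaThreshold (exp (L - 1)) B f = min f (min (exp (f / B * L)) (exp (L - 1))) := by
  rw [ohaThreshold, ← exp_add, sub_add_cancel, ← exp_mul]
  congr 3
  field_simp
  ring

theorem card_workers_ohaFinal_le (ws : List (Fin n)) (s : OhaState n m) :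
    ((ohaFinal J b choice R B ws s).workers.card : ℝ) ≤
      s.workers.card + ohaRun J b choice R B ws s.tasks s.budget := by
  simpa using apply_ohaFinal_le (J := J) (b := b) (choice := choice) (R := R) (B := B)
    (fun t => (t.workers.card : ℝ)) 1 (fun s i h => by
      simp only [ohaStep, if_pos h]
      exact_mod_cast Finset.card_insert_le _ _) ws s

variable (hchoice : ∀ s : Finset (Fin m), s.Nonempty → choice s ∈ s)
include hchoice

theorem choice_mem_ohaCandidates {i : Fin n} {T : Finset (Fin m)} {f : ℝ}
    (h : (ohaCandidates J b R B i T f).Nonempty) :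
    choice (ohaCandidates J b R B i T f) ∈ T ∧ choice (ohaCandidates J b R B i T f) ∈ J i ∧
      b i (choice (ohaCandidates J b R B i T f)) ≤ ohaThreshold R B f := by
  simpa [ohaCandidates] using hchoice _ h

theorem ohaFinal_mono (hb : ∀ i, ∀ j ∈ J i, 0 ≤ b i j) (ws : List (Fin n))
    (s : OhaState n m) :
    s.workers ⊆ (ohaFinal J b choice R B ws s).workers ∧
      (ohaFinal J b choice R B ws s).tasks ⊆ s.tasks ∧
      (ohaFinal J b choice R B ws s).budget ≤ s.budget := by
  refine ohaFinal_induction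
    (fun t => s.workers ⊆ t.workers ∧ t.tasks ⊆ s.tasks ∧ t.budget ≤ s.budget)
    (fun t i ht => ?_) ws s ⟨subset_rfl, subset_rfl, le_rfl⟩
  by_cases h : (ohaCandidates J b R B i t.tasks t.budget).Nonempty
  · obtain ⟨-, hJ, -⟩ := choice_mem_ohaCandidates hchoice h
    simp only [ohaStep, if_pos h]
    exact ⟨ht.1.trans (Finset.subset_insert _ _), (Finset.erase_subset _ _).trans ht.2.1,
      by linarith [ht.2.2, hb _ _ hJ]⟩
  · rwa [ohaStep_of_not_nonempty h]

/-- A worker is left unassigned only if all its free feasible tasks were priced above the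
threshold when it arrived; afterwards the threshold only decreases and free tasks only
disappear. -/
theorem ohaThreshold_ohaFinal_lt (hB : 0 < B) (hR : 1 ≤ R) (hb : ∀ i, ∀ j ∈ J i, 0 ≤ b i j) :
    ∀ (ws : List (Fin n)) (s : OhaState n m), ∀ i ∈ ws,
      i ∉ (ohaFinal J b choice R B ws s).workers → ∀ j ∈ J i,
      j ∈ (ohaFinal J b choice R B ws s).tasks →
      ohaThreshold R B (ohaFinal J b choice R B ws s).budget < b i j
  | [], _, i, hi => absurd hi List.not_mem_nil
  | i' :: ws, s, i, hi => by
    rw [ohaFinal]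
    rcases List.mem_cons.1 hi with rfl | hi
    · intro hW j hj hT
      obtain ⟨hWmono, hTmono, hfmono⟩ :=
        ohaFinal_mono hchoice hb ws (ohaStep J b choice R B s i)
      by_cases h : (ohaCandidates J b R B i s.tasks s.budget).Nonempty
      · refine absurd (hWmono ?_) hW
        simp only [ohaStep, if_pos h]
        exact Finset.mem_insert_self _ _
      · rw [ohaStep_of_not_nonempty h] at hT hTmono hfmono ⊢
        have hbij : ¬b i j ≤ ohaThreshold R B s.budget := fun hle =>
          h ⟨j, by simp [ohaCandidates, hTmono hT, hj, hle]⟩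
        exact (ohaThreshold_mono hB hR hfmono).trans_lt (not_le.1 hbij)
    · exact ohaThreshold_ohaFinal_lt hB hR hb ws _ i hi

theorem card_tasks_le_ohaFinal (ws : List (Fin n)) (s : OhaState n m) :
    (s.tasks.card : ℝ) ≤
      (ohaFinal J b choice R B ws s).tasks.card + ohaRun J b choice R B ws s.tasks s.budget := by
  have := apply_ohaFinal_le (J := J) (b := b) (choice := choice) (R := R) (B := B)
    (fun t => -(t.tasks.card : ℝ)) 1 (fun s i h => by
      simp only [ohaStep, if_pos h]
      rw [← Finset.card_erase_add_one (choice_mem_ohaCandidates hchoice h).1]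
      push_cast
      linarith) ws s
  simp only [one_mul] at this
  linarith

theorem budget_sub_ohaFinal_le (hbR : ∀ i, ∀ j ∈ J i, b i j ≤ R) (ws : List (Fin n))
    (s : OhaState n m) :
    s.budget - (ohaFinal J b choice R B ws s).budget ≤
      ohaRun J b choice R B ws s.tasks s.budget * R := by
  have := apply_ohaFinal_le (J := J) (b := b) (choice := choice) (R := R) (B := B)
    (fun t => -t.budget) R (fun s i h => by
      simp only [ohaStep, if_pos h]
      linarith [hbR _ _ (choice_mem_ohaCandidates hchoice h).2.1]) ws s
  linarith

theorem budget_ohaFinal_nonneg (ws : List (Fin n)) (s : OhaState n m) (hs : 0 ≤ s.budget) :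
    0 ≤ (ohaFinal J b choice R B ws s).budget := by
  refine ohaFinal_induction (fun t => 0 ≤ t.budget) (fun t i ht => ?_) ws s hs
  by_cases h : (ohaCandidates J b R B i t.tasks t.budget).Nonempty
  · simp only [ohaStep, if_pos h]
    linarith [(choice_mem_ohaCandidates hchoice h).2.2.trans (min_le_left _ _)]
  · rwa [ohaStep_of_not_nonempty h]

theorem mul_ohaPotential_ohaFinal_le {L ε : ℝ} (hL : 1 ≤ L) (hB : 0 < B)
    (hRB : exp (L - 1) ≤ ε * B) (hbids : ∀ i, ∀ j ∈ J i, 0 ≤ b i j ∧ b i j ≤ exp (L - 1))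
    (ws : List (Fin n)) (W : Finset (Fin n)) (T : Finset (Fin m)) :
    B * ohaPotential L ((B - (ohaFinal J b choice (exp (L - 1)) B ws ⟨W, T, B⟩).budget) / B)
      ≤ exp (ε * L) * ohaRun J b choice (exp (L - 1)) B ws T B := by
  have hε : 0 < ε := pos_of_mul_pos_left ((exp_pos _).trans_le hRB) hB.le
  set G : ℝ → ℝ := fun f =>
    B * ohaPotential L ((B - f) / B) - (exp (ε * L) - 1) * ((B - f) / B / ε)
  have hG : ∀ f c, 0 ≤ c → c ≤ exp (L - 1) → c ≤ exp (f / B * L) → G (f - c) ≤ G f + 1 := by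
    intro f c hc hcR hcφ
    have hx : (B - (f - c)) / B = (B - f) / B + c / B := by field_simp; ring
    have h1x : (1 - (B - f) / B) * L = f / B * L := by field_simp; ring
    have := mul_ohaPotential_add_le (show 0 < L by linarith) hB.le hε (div_nonneg hc hB.le)
      ((div_le_iff₀ hB).2 (hcR.trans hRB)) (x := (B - f) / B)
      (by rwa [mul_div_cancel₀ _ hB.ne']) (by rwa [mul_div_cancel₀ _ hB.ne', h1x])
    simp only [G, hx, add_div, mul_add]
    linarith
  have hacc := apply_ohaFinal_le (J := J) (b := b) (choice := choice) (R := exp (L - 1))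
    (B := B) (fun t => G t.budget) 1 (fun s i h => by
      obtain ⟨-, hj, hbj⟩ := choice_mem_ohaCandidates hchoice h
      rw [ohaThreshold_exp_eq hB.ne'] at hbj
      simp only [ohaStep, if_pos h]
      exact hG _ _ (hbids i _ hj).1 (hbids i _ hj).2
        (hbj.trans ((min_le_right _ _).trans (min_le_left _ _)))) ws ⟨W, T, B⟩
  have hspent := budget_sub_ohaFinal_le (B := B) hchoice (fun i j hj => (hbids i j hj).2) ws
    ⟨W, T, B⟩
  set f := (ohaFinal J b choice (exp (L - 1)) B ws ⟨W, T, B⟩).budget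
  set k := ohaRun J b choice (exp (L - 1)) B ws T B
  have hG0 : G B = 0 := by simp [G, ohaPotential_zero (show 0 < L by linarith)]
  have hx : (B - f) / B / ε ≤ (k : ℝ) := by
    rw [div_div, div_le_iff₀ (by positivity)]
    nlinarith [(k.cast_nonneg : (0 : ℝ) ≤ k)]
  have ha : 0 ≤ exp (ε * L) - 1 := by linarith [one_le_exp (by positivity : 0 ≤ ε * L)]
  simp only [G, hG0] at hacc
  nlinarith [mul_le_mul_of_nonneg_left hx ha]

theorem card_filter_ohaFinal_le {L ε : ℝ} (hL : 1 ≤ L) (hB : 0 < B)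
    (hRB : exp (L - 1) ≤ ε * B) (hbids : ∀ i, ∀ j ∈ J i, 1 ≤ b i j ∧ b i j ≤ exp (L - 1))
    {P : Finset (Fin n × Fin m)} (hPJ : ∀ p ∈ P, p.2 ∈ J p.1) (hPB : ∑ p ∈ P, b p.1 p.2 ≤ B)
    (W : Finset (Fin n)) (T : Finset (Fin m)) :
    ((P.filter fun p =>
        p.1 ∉ (ohaFinal J b choice (exp (L - 1)) B (List.finRange n) ⟨W, T, B⟩).workers ∧
        p.2 ∈ (ohaFinal J b choice (exp (L - 1)) B (List.finRange n) ⟨W, T, B⟩).tasks).card : ℝ)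
      ≤ (exp (ε * L) * L + 2 * exp (ε * L) - 2) *
        ohaRun J b choice (exp (L - 1)) B (List.finRange n) T B := by
  have hb0 : ∀ i, ∀ j ∈ J i, 0 ≤ b i j := fun i j hj => by linarith [(hbids i j hj).1]
  set s := ohaFinal J b choice (exp (L - 1)) B (List.finRange n) ⟨W, T, B⟩
  have hrej : ∀ p ∈ P.filter fun p => p.1 ∉ s.workers ∧ p.2 ∈ s.tasks,
      min s.budget (min (exp (s.budget / B * L)) (exp (L - 1))) < b p.1 p.2 := by
    intro p hp
    obtain ⟨hpP, hpW, hpT⟩ := Finset.mem_filter.1 hp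
    rw [← ohaThreshold_exp_eq hB.ne']
    exact ohaThreshold_ohaFinal_lt hchoice hB (one_le_exp (by linarith)) hb0 _ _ p.1
      (List.mem_finRange _) hpW p.2 (hPJ p hpP) hpT
  refine card_le_of_threshold_lt _ (fun p => b p.1 p.2) hL hB hRB
    (budget_ohaFinal_nonneg hchoice _ _ hB.le)
    (budget_sub_ohaFinal_le hchoice (fun i j hj => (hbids i j hj).2) _ ⟨W, T, B⟩)
    (mul_ohaPotential_ohaFinal_le hchoice hL hB hRB
      (fun i j hj => ⟨hb0 i j hj, (hbids i j hj).2⟩) _ W T)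
    (fun p hp => (hbids _ _ (hPJ p (Finset.mem_filter.1 hp).1)).1)
    (fun p hp => (hbids _ _ (hPJ p (Finset.mem_filter.1 hp).1)).2) hrej ?_
  exact (Finset.sum_le_sum_of_subset_of_nonneg (Finset.filter_subset _ _)
    fun p hp _ => hb0 _ _ (hPJ p hp)).trans hPB

end Algorithm

theorem Finset.card_le_card_add_card_compl_add_card_filter {α β : Type*} [DecidableEq α]
    [DecidableEq β] [Fintype β] {P : Finset (α × β)}
    (hfst : Set.InjOn Prod.fst (P : Set (α × β))) (hsnd : Set.InjOn Prod.snd (P : Set (α × β)))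
    (W : Finset α) (T : Finset β) :
    P.card ≤ W.card + Tᶜ.card + (P.filter fun p => p.1 ∉ W ∧ p.2 ∈ T).card := by
  have hW : (P.filter fun p => p.1 ∈ W).card ≤ W.card :=
    Finset.card_le_card_of_injOn Prod.fst (fun p hp => (Finset.mem_filter.1 hp).2)
      (hfst.mono (Finset.filter_subset _ _))
  have hT : (P.filter fun p => p.2 ∉ T).card ≤ Tᶜ.card :=
    Finset.card_le_card_of_injOn Prod.snd
      (fun p hp => Finset.mem_compl.2 (Finset.mem_filter.1 hp).2)
      (hsnd.mono (Finset.filter_subset _ _))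
  have hcover : P ⊆ (P.filter fun p => p.1 ∈ W) ∪ (P.filter fun p => p.2 ∉ T) ∪
      P.filter fun p => p.1 ∉ W ∧ p.2 ∈ T := by
    intro p hp
    simp only [Finset.mem_union, Finset.mem_filter]
    tauto
  calc P.card ≤ _ := Finset.card_le_card hcover
    _ ≤ _ := Finset.card_union_le _ _
    _ ≤ _ := Nat.add_le_add_right (Finset.card_union_le _ _) _
    _ ≤ _ := by omega

section Assignment

variable {n m : ℕ} {J : Fin n → Finset (Fin m)} {P : Finset (Fin n × Fin m)}

theorem IsAssignment.injOn_fst (hP : IsAssignment J P) :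
    Set.InjOn Prod.fst (P : Set (Fin n × Fin m)) := fun p hp q hq h =>
  by_contra fun hpq => (hP.2 p hp q hq hpq).1 h

theorem IsAssignment.injOn_snd (hP : IsAssignment J P) :
    Set.InjOn Prod.snd (P : Set (Fin n × Fin m)) := fun p hp q hq h =>
  by_contra fun hpq => (hP.2 p hp q hq hpq).2 h

end Assignment

theorem exists_isAssignment_card_eq_OPTval {n m : ℕ} (J : Fin n → Finset (Fin m))
    (b : Fin n → Fin m → ℝ) {B : ℝ} (hB : 0 ≤ B) :
    ∃ P, IsAssignment J P ∧ ∑ p ∈ P, b p.1 p.2 ≤ B ∧ OPTval J b B = P.card := by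
  classical
  unfold OPTval
  obtain ⟨P, hP, hsup⟩ := Finset.exists_mem_eq_sup
    ((Finset.univ : Finset (Finset (Fin n × Fin m))).filter
      fun P => IsAssignment J P ∧ ∑ p ∈ P, b p.1 p.2 ≤ B)
    ⟨∅, by simp [IsAssignment, hB]⟩ Finset.card
  rw [Finset.mem_filter] at hP
  exact ⟨P, hP.2.1, hP.2.2, hsup⟩

/-- For every sequence of workers with all bids in `[1, R]` and
`R ≤ ε B`, and every fixed tie-breaking rule `choice`, the number of tasks assigned by
the Online Heterogeneous Algorithm `OHA` satisfies
`OPT ≤ (R·e)^ε * (ln R + 3) * ALG_OHA`. -/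
theorem online_heterogeneous {n m : ℕ} (J : Fin n → Finset (Fin m))
    (b : Fin n → Fin m → ℝ) (R ε B : ℝ) (hB : 0 < B) (hR : 1 ≤ R)
    (hbids : ∀ i, ∀ j ∈ J i, 1 ≤ b i j ∧ b i j ≤ R) (hRB : R ≤ ε * B)
    (choice : Finset (Fin m) → Fin m)
    (hchoice : ∀ s : Finset (Fin m), s.Nonempty → choice s ∈ s) :
    (OPTval J b B : ℝ) ≤
      (R * Real.exp 1) ^ ε * (Real.log R + 3) *
        (ohaRun J b choice R B (List.finRange n) Finset.univ B : ℝ) := by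
  classical
  obtain ⟨L, hL, rfl⟩ : ∃ L, 1 ≤ L ∧ R = exp (L - 1) :=
    ⟨log R + 1, by linarith [log_nonneg hR], by rw [add_sub_cancel_right, exp_log (by linarith)]⟩
  obtain ⟨P, hP, hPB, hOPT⟩ := exists_isAssignment_card_eq_OPTval J b hB.le
  let s₀ : OhaState n m := ⟨∅, Finset.univ, B⟩
  set s := ohaFinal J b choice (exp (L - 1)) B (List.finRange n) s₀
  set k := ohaRun J b choice (exp (L - 1)) B (List.finRange n) Finset.univ B
  have hW : (s.workers.card : ℝ) ≤ k := by
    simpa [s₀] using card_workers_ohaFinal_le (List.finRange n) s₀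
  have hT : (s.tasksᶜ.card : ℝ) ≤ k := by
    have : ((Finset.univ : Finset (Fin m)).card : ℝ) ≤ s.tasks.card + k :=
      card_tasks_le_ohaFinal hchoice (List.finRange n) s₀
    have : (s.tasks.card : ℝ) + s.tasksᶜ.card = (Finset.univ : Finset (Fin m)).card := by
      exact_mod_cast Finset.card_add_card_compl s.tasks
    linarith
  have hQ := card_filter_ohaFinal_le hchoice hL hB hRB hbids hP.1 hPB ∅ Finset.univ
  have hP_le : (P.card : ℝ) ≤ s.workers.card + s.tasksᶜ.card +
      (P.filter fun p => p.1 ∉ s.workers ∧ p.2 ∈ s.tasks).card := by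
    exact_mod_cast Finset.card_le_card_add_card_compl_add_card_filter hP.injOn_fst hP.injOn_snd
      s.workers s.tasks
  rw [hOPT, ← exp_add, sub_add_cancel, ← exp_mul, log_exp, mul_comm L ε]
  linarith
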